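/- arXiv:1406.6123 — 10 statements merged into one kernel-verified Lean document; each statement's English description precedes it below -/
import Mathlib

section
/- Let L(n) = lcm_{mn < i ≤ ln} {f(i)} and let P(n) be the set of prime factors of L(n) that do not divide lcm(a₁b₂ − a₂b₁, q). If p ∈ P(n) and v_p(L(n)) ≥ 2, then p² divides a₁i+b₁ or a₂i+b₂ for some integer i with mn < i ≤ ln; in particular p ≤ max(√(a₁ln+b₁), √(a₂ln+b₂)). -/
/-- `L(n) = lcm_{mn < i ≤ ln} f(i)` with `f(i) = (a₁ i + b₁)(a₂ i + b₂)`. -/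
def Lfn (l m a₁ a₂ b₁ b₂ n : ℕ) : ℕ :=
  (Finset.Ioc (m * n) (l * n)).lcm (fun i => (a₁ * i + b₁) * (a₂ * i + b₂))

/-- `P(n)`: the prime factors of `L(n)` not dividing `lcm(a₁b₂ − a₂b₁, q)`. -/
def Pfact (l m a₁ a₂ b₁ b₂ q n : ℕ) : Set ℕ :=
  {p : ℕ | p.Prime ∧ p ∣ Lfn l m a₁ a₂ b₁ b₂ n ∧
    ¬ p ∣ Nat.lcm (Int.natAbs ((a₁ : ℤ) * b₂ - (a₂ : ℤ) * b₁)) q}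

/-! A prime `p` dividing both `a₁ i + b₁` and `a₂ i + b₂` divides the resultant `a₁ b₂ - a₂ b₁`,
so for `p ∈ P(n)` the two linear factors of `f(i)` are never both divisible by `p`, and a `p²`
dividing `f(i)` lands entirely in one of them. Since `L(n)` is an lcm, `p² ∣ L(n)` already
forces `p² ∣ f(i)` for a single `i`, and then `p² ≤ aᵢ i + bᵢ ≤ aᵢ l n + bᵢ`. -/

theorem Nat.Prime.exists_pow_dvd_of_pow_dvd_finset_lcm {ι : Type*} {s : Finset ι} {f : ι → ℕ}
    (hf : ∀ i ∈ s, f i ≠ 0) {p k : ℕ} (hp : p.Prime) (hk : k ≠ 0) (h : p ^ k ∣ s.lcm f) :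
    ∃ i ∈ s, p ^ k ∣ f i := by
  rw [hp.pow_dvd_iff_le_factorization (Finset.lcm_ne_zero_iff.2 hf), Finset.factorization_lcm hf,
    Finset.le_sup_iff (Nat.pos_of_ne_zero hk)] at h
  obtain ⟨i, hi, hle⟩ := h
  exact ⟨i, hi, (hp.pow_dvd_iff_le_factorization (hf i hi)).2 hle⟩

theorem Prime.pow_dvd_or_pow_dvd_of_pow_dvd_mul {M : Type*} [CommMonoidWithZero M]
    [IsCancelMulZero M] {p a b : M} (hp : Prime p) (n : ℕ) (hab : ¬ (p ∣ a ∧ p ∣ b))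
    (h : p ^ n ∣ a * b) : p ^ n ∣ a ∨ p ^ n ∣ b := by
  by_cases ha : p ∣ a
  · exact Or.inl (hp.pow_dvd_of_dvd_mul_right n (fun hb => hab ⟨ha, hb⟩) h)
  · exact Or.inr (hp.pow_dvd_of_dvd_mul_left n ha h)

theorem dvd_mul_sub_mul_of_dvd_mul_add {R : Type*} [CommRing R] {d a₁ a₂ b₁ b₂ x : R}
    (h₁ : d ∣ a₁ * x + b₁) (h₂ : d ∣ a₂ * x + b₂) : d ∣ a₁ * b₂ - a₂ * b₁ := by
  have h : a₁ * b₂ - a₂ * b₁ = a₁ * (a₂ * x + b₂) - a₂ * (a₁ * x + b₁) := by ring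
  rw [h]
  exact dvd_sub (h₂.mul_left a₁) (h₁.mul_left a₂)

theorem le_sqrt_of_sq_dvd_mul_add {p a b i : ℕ} {x : ℝ} (hdvd : p ^ 2 ∣ a * i + b) (hb : 0 < b)
    (hi : (i : ℝ) ≤ x) : (p : ℝ) ≤ √(a * x + b) := by
  have hle : p ^ 2 ≤ a * i + b := Nat.le_of_dvd (by positivity) hdvd
  have hx : 0 ≤ x := (Nat.cast_nonneg i).trans hi
  rw [Real.le_sqrt (Nat.cast_nonneg p) (by positivity)]
  calc (p : ℝ) ^ 2 ≤ a * i + b := by exact_mod_cast hle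
    _ ≤ a * x + b := by gcongr

theorem padic_val_ge_two_implies_sq_dvd_general (l m : ℕ)
    (a₁ a₂ b₁ b₂ : ℕ) (hb₁ : 0 < b₁) (hb₂ : 0 < b₂)
    (q : ℕ)
    (n p : ℕ) (hp : p ∈ Pfact l m a₁ a₂ b₁ b₂ q n)
    (hv : 2 ≤ padicValNat p (Lfn l m a₁ a₂ b₁ b₂ n)) :
    (∃ i : ℕ, m * n < i ∧ i ≤ l * n ∧ (p ^ 2 ∣ a₁ * i + b₁ ∨ p ^ 2 ∣ a₂ * i + b₂)) ∧
      (p : ℝ) ≤ max (Real.sqrt ((a₁ : ℝ) * l * n + b₁)) (Real.sqrt ((a₂ : ℝ) * l * n + b₂)) := by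
  obtain ⟨hp_prime, -, hp_resultant⟩ := hp
  have hsq : p ^ 2 ∣ Lfn l m a₁ a₂ b₁ b₂ n := (pow_dvd_pow p hv).trans pow_padicValNat_dvd
  obtain ⟨i, hi, hdvd⟩ :=
    hp_prime.exists_pow_dvd_of_pow_dvd_finset_lcm (fun i _ => by positivity) two_ne_zero hsq
  rw [Finset.mem_Ioc] at hi
  have hnot_both : ¬ (p ∣ a₁ * i + b₁ ∧ p ∣ a₂ * i + b₂) := by
    rintro ⟨h₁, h₂⟩
    have h : (p : ℤ) ∣ a₁ * b₂ - a₂ * b₁ :=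
      dvd_mul_sub_mul_of_dvd_mul_add (x := (i : ℤ)) (by exact_mod_cast h₁) (by exact_mod_cast h₂)
    exact hp_resultant ((Int.natCast_dvd.1 h).trans (Nat.dvd_lcm_left _ q))
  have hfactor := hp_prime.prime.pow_dvd_or_pow_dvd_of_pow_dvd_mul 2 hnot_both hdvd
  refine ⟨⟨i, hi.1, hi.2, hfactor⟩, ?_⟩
  have hi_le : (i : ℝ) ≤ l * n := by exact_mod_cast hi.2
  simp only [mul_assoc]
  rcases hfactor with h | h
  · exact le_max_of_le_left (le_sqrt_of_sq_dvd_mul_add h hb₁ hi_le)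
  · exact le_max_of_le_right (le_sqrt_of_sq_dvd_mul_add h hb₂ hi_le)

theorem padic_val_ge_two_implies_sq_dvd (l m : ℕ) (hlm : m < l)
    (a₁ a₂ b₁ b₂ : ℕ) (ha₁ : 0 < a₁) (ha₂ : 0 < a₂) (hb₁ : 0 < b₁) (hb₂ : 0 < b₂)
    (hcop₁ : Nat.gcd a₁ b₁ = 1) (hcop₂ : Nat.gcd a₂ b₂ = 1) (hne : a₁ * b₂ ≠ a₂ * b₁)
    (q : ℕ) (hq : q = Nat.lcm a₁ a₂)
    (n p : ℕ) (hp : p ∈ Pfact l m a₁ a₂ b₁ b₂ q n)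
    (hv : 2 ≤ padicValNat p (Lfn l m a₁ a₂ b₁ b₂ n)) :
    (∃ i : ℕ, m * n < i ∧ i ≤ l * n ∧ (p ^ 2 ∣ a₁ * i + b₁ ∨ p ^ 2 ∣ a₂ * i + b₂)) ∧
      (p : ℝ) ≤ max (Real.sqrt ((a₁ : ℝ) * l * n + b₁)) (Real.sqrt ((a₂ : ℝ) * l * n + b₂)) :=
  padic_val_ge_two_implies_sq_dvd_general l m a₁ a₂ b₁ b₂ hb₁ hb₂ q n p hp hv
end

section
/- Let r' and r be integers with 1 ≤ r', r ≤ q and rr' ≡ 1 (mod q), and let p be a prime with p ≡ r' (mod q). Then for each j ∈ {1,2} and each positive integer k, p divides a_j k + b_j if and only if a_j k + b_j = (a_j i + ⟨b_j r⟩_{a_j}) · p for some nonnegative integer i. -/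
/-- `modRep a b` is the smallest positive integer congruent to `b` modulo `a`,
i.e. the unique `s` with `1 ≤ s ≤ a` and `s ≡ b [MOD a]` (for `a, b ≥ 1`),
denoted `⟨b⟩_a` in the paper. -/
def modRep (a b : ℕ) : ℕ := (b - 1) % a + 1

theorem dvd_term_iff_eq_multiple
    (a₁ a₂ b₁ b₂ : ℕ) (ha₁ : 0 < a₁) (ha₂ : 0 < a₂) (hb₁ : 0 < b₁) (hb₂ : 0 < b₂)
    (hcop₁ : Nat.gcd a₁ b₁ = 1) (hcop₂ : Nat.gcd a₂ b₂ = 1)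
    (q : ℕ) (hq : q = Nat.lcm a₁ a₂)
    (r r' : ℕ) (hr : 1 ≤ r) (hrq : r ≤ q) (hr' : 1 ≤ r') (hr'q : r' ≤ q)
    (hinv : r * r' ≡ 1 [MOD q])
    (p : ℕ) (hp : p.Prime) (hpr : p ≡ r' [MOD q]) :
    ∀ a b : ℕ, ((a, b) = (a₁, b₁) ∨ (a, b) = (a₂, b₂)) →
      ∀ k : ℕ, 0 < k →
        (p ∣ a * k + b ↔ ∃ i : ℕ, a * k + b = (a * i + modRep a (b * r)) * p) := by
  intro a b hab k hk
  obtain ⟨haq, ha, hb⟩ : a ∣ q ∧ 0 < a ∧ 0 < b := by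
    rcases hab with h | h <;> (injection h with h1 h2; subst h1; subst h2)
    · exact ⟨hq ▸ Nat.dvd_lcm_left _ _, ha₁, hb₁⟩
    · exact ⟨hq ▸ Nat.dvd_lcm_right _ _, ha₂, hb₂⟩
  set s := modRep a (b * r) with hs
  have hbr : 1 ≤ b * r := Nat.one_le_iff_ne_zero.mpr (by positivity)
  have hs_cong : s ≡ b * r [MOD a] := by
    have h1 : (b * r - 1) % a ≡ b * r - 1 [MOD a] := Nat.mod_modEq _ _
    have h2 : (b * r - 1) % a + 1 ≡ (b * r - 1) + 1 [MOD a] := h1.add_right 1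
    rwa [Nat.sub_add_cancel hbr] at h2
  have hs1 : 1 ≤ s := Nat.le_add_left 1 _
  have hsa : s ≤ a := by
    have := Nat.mod_lt (b * r - 1) ha
    simp only [hs, modRep]
    omega
  constructor
  · rintro ⟨m, hm⟩
    have h1 : p ≡ r' [MOD a] := hpr.of_dvd haq
    have h2 : r * r' ≡ 1 [MOD a] := hinv.of_dvd haq
    have h3 : m * p ≡ b [MOD a] := by
      show (m * p) % a = b % a
      rw [mul_comm, ← hm, Nat.mul_add_mod]
    have h4 : m ≡ s [MOD a] := by
      calc m = m * 1 := (mul_one m).symm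
        _ ≡ m * (r * r') [MOD a] := (Nat.ModEq.mul_left m h2).symm
        _ = m * r' * r := by ring
        _ ≡ m * p * r [MOD a] := Nat.ModEq.mul_right r (Nat.ModEq.mul_left m h1.symm)
        _ ≡ b * r [MOD a] := Nat.ModEq.mul_right r h3
        _ ≡ s [MOD a] := hs_cong.symm
    have hm1 : 1 ≤ m := by
      rcases Nat.eq_zero_or_pos m with h0 | h
      · subst h0; simp at hm; omega
      · exact h
    have hmod : m % a = s % a := h4
    have hms : s ≤ m := by
      rcases Nat.lt_or_ge s a with hlt | hge
      · calc s = s % a := (Nat.mod_eq_of_lt hlt).symm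
          _ = m % a := hmod.symm
          _ ≤ m := Nat.mod_le m a
      · have hsa' : s = a := le_antisymm hsa hge
        have hdvd : a ∣ m := by
          apply Nat.dvd_of_mod_eq_zero
          rw [hmod, hsa', Nat.mod_self]
        calc s = a := hsa'
          _ ≤ m := Nat.le_of_dvd hm1 hdvd
    obtain ⟨i, hi⟩ := (Nat.modEq_iff_dvd' hms).mp h4.symm
    refine ⟨i, ?_⟩
    have hmi : m = a * i + s := by omega
    rw [hm, hmi]; ring
  · rintro ⟨i, hi⟩
    exact ⟨a * i + s, by rw [hi, mul_comm]⟩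
end

section
/- Let r' and r be integers with 1 ≤ r', r ≤ q and rr' ≡ 1 (mod q), and let p be a prime with p ≡ r' (mod q) and p not dividing a₁b₂ − a₂b₁. Then p divides f(i) for some integer i with mn < i ≤ ln if and only if there exist j ∈ {1,2} and a nonnegative integer i_j such that a_j m n + b_j < (a_j i_j + ⟨b_j r⟩_{a_j}) · p ≤ a_j l n + b_j. -/
theorem modRep_modEq (a : ℕ) {x : ℕ} (hx : 0 < x) : modRep a x ≡ x [MOD a] := by
  have h := (Nat.mod_modEq (x - 1) a).add_right 1
  rwa [Nat.sub_add_cancel hx] at h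

theorem eq_mul_div_add_modRep {a c x : ℕ} (hc : 0 < c) (hx : 0 < x) (h : c ≡ x [MOD a]) :
    c = a * ((c - 1) / a) + modRep a x := by
  have hmod : (c - 1) % a = (x - 1) % a :=
    Nat.ModEq.add_right_cancel' 1 (by rwa [Nat.sub_add_cancel hc, Nat.sub_add_cancel hx])
  have := Nat.div_add_mod (c - 1) a
  unfold modRep
  omega

theorem mul_modEq_iff_modEq_mul {a b c p r : ℕ} (hpr : p * r ≡ 1 [MOD a]) :
    c * p ≡ b [MOD a] ↔ c ≡ b * r [MOD a] := by
  constructor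
  · intro h
    calc c = c * 1 := (mul_one c).symm
      _ ≡ c * (p * r) [MOD a] := hpr.symm.mul_left c
      _ = c * p * r := (mul_assoc c p r).symm
      _ ≡ b * r [MOD a] := h.mul_right r
  · intro h
    calc c * p ≡ b * r * p [MOD a] := h.mul_right p
      _ = b * (p * r) := by ring
      _ ≡ b * 1 [MOD a] := hpr.mul_left b
      _ = b := mul_one b

theorem exists_dvd_mul_add_iff {a b p u v : ℕ} (ha : 0 < a) :
    (∃ i, u < i ∧ i ≤ v ∧ p ∣ a * i + b) ↔
      ∃ c, c * p ≡ b [MOD a] ∧ a * u + b < c * p ∧ c * p ≤ a * v + b := by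
  constructor
  · rintro ⟨i, hui, hiv, c, hc⟩
    refine ⟨c, ?_, ?_, ?_⟩ <;> rw [mul_comm c, ← hc]
    · exact Nat.modulus_mul_add_modEq_iff.2 rfl
    all_goals nlinarith
  · rintro ⟨c, hcb, hlo, hhi⟩
    obtain ⟨i, hi⟩ : a ∣ c * p - b := (Nat.modEq_iff_dvd' (by omega)).1 hcb.symm
    have hcp : c * p = a * i + b := by omega
    refine ⟨i, lt_of_mul_lt_mul_left (a := a) (by omega) (Nat.zero_le a),
      Nat.le_of_mul_le_mul_left (by omega) ha, c, by rw [← hcp, mul_comm]⟩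

theorem exists_dvd_mul_add_iff_modRep {a b p r u v : ℕ} (ha : 0 < a) (hb : 0 < b) (hr : 0 < r)
    (hpr : p * r ≡ 1 [MOD a]) :
    (∃ i, u < i ∧ i ≤ v ∧ p ∣ a * i + b) ↔
      ∃ k, a * u + b < (a * k + modRep a (b * r)) * p ∧
        (a * k + modRep a (b * r)) * p ≤ a * v + b := by
  have hbr : 0 < b * r := Nat.mul_pos hb hr
  rw [exists_dvd_mul_add_iff ha]
  constructor
  · rintro ⟨c, hcb, hlo, hhi⟩
    have hc : 0 < c := Nat.pos_of_ne_zero (by rintro rfl; omega)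
    rw [eq_mul_div_add_modRep hc hbr ((mul_modEq_iff_modEq_mul hpr).1 hcb)] at hlo hhi
    exact ⟨_, hlo, hhi⟩
  · rintro ⟨k, hlo, hhi⟩
    exact ⟨_, (mul_modEq_iff_modEq_mul hpr).2
      (Nat.modulus_mul_add_modEq_iff.2 (modRep_modEq a hbr)), hlo, hhi⟩

theorem prime_dvd_f_iff_interval_general (l m : ℕ)
    (a₁ a₂ b₁ b₂ : ℕ) (ha₁ : 0 < a₁) (ha₂ : 0 < a₂) (hb₁ : 0 < b₁) (hb₂ : 0 < b₂)
    (q : ℕ) (hq : q = Nat.lcm a₁ a₂)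
    (r r' : ℕ) (hr : 1 ≤ r)
    (hinv : r * r' ≡ 1 [MOD q])
    (p : ℕ) (hp : p.Prime) (hpr : p ≡ r' [MOD q])
    (n : ℕ) :
    (∃ i : ℕ, m * n < i ∧ i ≤ l * n ∧ p ∣ (a₁ * i + b₁) * (a₂ * i + b₂)) ↔
      ((∃ i : ℕ, a₁ * m * n + b₁ < (a₁ * i + modRep a₁ (b₁ * r)) * p ∧
          (a₁ * i + modRep a₁ (b₁ * r)) * p ≤ a₁ * l * n + b₁) ∨
       (∃ i : ℕ, a₂ * m * n + b₂ < (a₂ * i + modRep a₂ (b₂ * r)) * p ∧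
          (a₂ * i + modRep a₂ (b₂ * r)) * p ≤ a₂ * l * n + b₂)) := by
  have hpr_inv : p * r ≡ 1 [MOD q] := (hpr.mul_right r).trans (by rwa [mul_comm])
  subst hq
  simp only [hp.dvd_mul, and_or_left, exists_or, mul_assoc]
  exact or_congr
    (exists_dvd_mul_add_iff_modRep ha₁ hb₁ hr (hpr_inv.of_dvd (Nat.dvd_lcm_left a₁ a₂)))
    (exists_dvd_mul_add_iff_modRep ha₂ hb₂ hr (hpr_inv.of_dvd (Nat.dvd_lcm_right a₁ a₂)))

theorem prime_dvd_f_iff_interval (l m : ℕ) (hlm : m < l)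
    (a₁ a₂ b₁ b₂ : ℕ) (ha₁ : 0 < a₁) (ha₂ : 0 < a₂) (hb₁ : 0 < b₁) (hb₂ : 0 < b₂)
    (hcop₁ : Nat.gcd a₁ b₁ = 1) (hcop₂ : Nat.gcd a₂ b₂ = 1) (hne : a₁ * b₂ ≠ a₂ * b₁)
    (q : ℕ) (hq : q = Nat.lcm a₁ a₂)
    (r r' : ℕ) (hr : 1 ≤ r) (hrq : r ≤ q) (hr' : 1 ≤ r') (hr'q : r' ≤ q)
    (hinv : r * r' ≡ 1 [MOD q])
    (p : ℕ) (hp : p.Prime) (hpr : p ≡ r' [MOD q])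
    (hpd : ¬ (p : ℤ) ∣ ((a₁ : ℤ) * b₂ - (a₂ : ℤ) * b₁)) (n : ℕ) :
    (∃ i : ℕ, m * n < i ∧ i ≤ l * n ∧ p ∣ (a₁ * i + b₁) * (a₂ * i + b₂)) ↔
      ((∃ i : ℕ, a₁ * m * n + b₁ < (a₁ * i + modRep a₁ (b₁ * r)) * p ∧
          (a₁ * i + modRep a₁ (b₁ * r)) * p ≤ a₁ * l * n + b₁) ∨
       (∃ i : ℕ, a₂ * m * n + b₂ < (a₂ * i + modRep a₂ (b₂ * r)) * p ∧
          (a₂ * i + modRep a₂ (b₂ * r)) * p ≤ a₂ * l * n + b₂)) :=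
  prime_dvd_f_iff_interval_general l m a₁ a₂ b₁ b₂ ha₁ ha₂ hb₁ hb₂ q hq r r' hr hinv p hp hpr n
end

section
/- Let r' be an integer with 1 ≤ r' ≤ q and gcd(r',q)=1. Every prime p with p ≡ r' (mod q), p ≤ (l−m)n and p not dividing a₁b₂ − a₂b₁ divides f(i) for some integer i with mn < i ≤ ln. -/
theorem small_prime_divides_some_term (l m : ℕ) (hlm : m < l)
    (a₁ a₂ b₁ b₂ : ℕ) (ha₁ : 0 < a₁) (ha₂ : 0 < a₂) (hb₁ : 0 < b₁) (hb₂ : 0 < b₂)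
    (hcop₁ : Nat.gcd a₁ b₁ = 1) (hcop₂ : Nat.gcd a₂ b₂ = 1) (hne : a₁ * b₂ ≠ a₂ * b₁)
    (q : ℕ) (hq : q = Nat.lcm a₁ a₂)
    (n : ℕ) (hn : 0 < n)
    (r' : ℕ) (hr' : 1 ≤ r') (hr'q : r' ≤ q) (hgcd : Nat.gcd r' q = 1)
    (p : ℕ) (hp : p.Prime) (hpr : p ≡ r' [MOD q]) (hple : p ≤ (l - m) * n)
    (hpd : ¬ (p : ℤ) ∣ ((a₁ : ℤ) * b₂ - (a₂ : ℤ) * b₁)) :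
    ∃ i : ℕ, m * n < i ∧ i ≤ l * n ∧ p ∣ (a₁ * i + b₁) * (a₂ * i + b₂) := by
  haveI : Fact p.Prime := ⟨hp⟩
  have hp0 : 0 < p := hp.pos
  -- p is coprime to q, hence to a₁
  have hpq : Nat.gcd p q = 1 := by
    rw [Nat.gcd_comm, Nat.gcd_rec, hpr, ← Nat.gcd_rec, Nat.gcd_comm, hgcd]
  have hpa₁ : ¬ p ∣ a₁ := by
    intro h
    have : p ∣ Nat.gcd p q := Nat.dvd_gcd dvd_rfl (h.trans (hq ▸ Nat.dvd_lcm_left a₁ a₂))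
    rw [hpq] at this
    exact hp.one_lt.ne' (Nat.le_antisymm (Nat.le_of_dvd one_pos this) hp0)
  have ha₁z : (a₁ : ZMod p) ≠ 0 := by
    rwa [Ne, ZMod.natCast_eq_zero_iff]
  -- solve a₁ * x + b₁ = 0 in ZMod p
  set x : ZMod p := -(b₁ : ZMod p) * (a₁ : ZMod p)⁻¹ with hx
  set c : ℕ := x.val with hcdef
  have hc : p ∣ a₁ * c + b₁ := by
    rw [← ZMod.natCast_eq_zero_iff]
    push_cast
    rw [hcdef, ZMod.natCast_val, ZMod.cast_id, hx]
    field_simp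
    ring
  set r : ℕ := (c + (p - 1) * (m * n + 1)) % p with hr
  refine ⟨m * n + 1 + r, by omega, ?_, ?_⟩
  · have hrlt : r < p := Nat.mod_lt _ hp0
    have : (l - m) * n + m * n = l * n := by
      rw [← Nat.add_mul, Nat.sub_add_cancel hlm.le]
    omega
  · have hmod : m * n + 1 + r ≡ c [MOD p] := by
      calc m * n + 1 + r ≡ m * n + 1 + (c + (p - 1) * (m * n + 1)) [MOD p] :=
            Nat.ModEq.add_left _ (Nat.mod_modEq _ p)
        _ = c + p * (m * n + 1) := by
            obtain ⟨k, rfl⟩ : ∃ k, p = k + 1 := ⟨p - 1, by omega⟩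
            simp only [Nat.add_sub_cancel]
            ring
        _ ≡ c [MOD p] := by
            simp [Nat.ModEq, Nat.add_mul_mod_self_left]
    have h1 : a₁ * (m * n + 1 + r) + b₁ ≡ a₁ * c + b₁ [MOD p] :=
      (hmod.mul_left a₁).add_right b₁
    have h2 : p ∣ a₁ * (m * n + 1 + r) + b₁ :=
      (Nat.modEq_zero_iff_dvd).1 (h1.trans ((Nat.modEq_zero_iff_dvd).2 hc))
    exact Dvd.dvd.mul_right h2 _
end

section
/- Let r be an integer with 1 ≤ r ≤ q and gcd(r,q) = 1, and suppose a₁⟨b₂r⟩_{a₂} ≥ a₂⟨b₁r⟩_{a₁}. Then H₁ = H₂ or H₁ = H₂ + 1, where H_j = ⌊(a_j l − (l−m)⟨b_j r⟩_{a_j})/(a_j(l−m))⌋ for j = 1, 2. -/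
theorem H1_eq_H2_or_succ (l m : ℕ) (hlm : m < l)
    (a₁ a₂ b₁ b₂ : ℕ) (ha₁ : 0 < a₁) (ha₂ : 0 < a₂) (hb₁ : 0 < b₁) (hb₂ : 0 < b₂)
    (hcop₁ : Nat.gcd a₁ b₁ = 1) (hcop₂ : Nat.gcd a₂ b₂ = 1)
    (q : ℕ) (hq : q = Nat.lcm a₁ a₂)
    (r : ℕ) (hr : 1 ≤ r) (hrq : r ≤ q) (hgcd : Nat.gcd r q = 1)
    (hcase : a₂ * modRep a₁ (b₁ * r) ≤ a₁ * modRep a₂ (b₂ * r))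
    (H₁ H₂ : ℤ)
    (hH₁ : H₁ = ⌊((a₁ : ℝ) * l - ((l : ℝ) - m) * modRep a₁ (b₁ * r)) /
        ((a₁ : ℝ) * ((l : ℝ) - m))⌋)
    (hH₂ : H₂ = ⌊((a₂ : ℝ) * l - ((l : ℝ) - m) * modRep a₂ (b₂ * r)) /
        ((a₂ : ℝ) * ((l : ℝ) - m))⌋) :
    H₁ = H₂ ∨ H₁ = H₂ + 1 := by
  set s₁ := modRep a₁ (b₁ * r) with hs₁def
  set s₂ := modRep a₂ (b₂ * r) with hs₂def
  have hs₁pos : 1 ≤ s₁ := Nat.le_add_left 1 _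
  have hs₂pos : 1 ≤ s₂ := Nat.le_add_left 1 _
  have hs₁le : s₁ ≤ a₁ := by
    have := Nat.mod_lt (b₁ * r - 1) ha₁
    simp only [hs₁def, modRep]; omega
  have hs₂le : s₂ ≤ a₂ := by
    have := Nat.mod_lt (b₂ * r - 1) ha₂
    simp only [hs₂def, modRep]; omega
  have hd : (0:ℝ) < (l : ℝ) - m := by
    have : (m:ℝ) < l := by exact_mod_cast hlm
    linarith
  have hA₁ : (0:ℝ) < (a₁ : ℝ) := by exact_mod_cast ha₁
  have hA₂ : (0:ℝ) < (a₂ : ℝ) := by exact_mod_cast ha₂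
  set x : ℝ := (l : ℝ) / ((l : ℝ) - m) with hx
  set t₁ : ℝ := (s₁ : ℝ) / a₁ with ht₁
  set t₂ : ℝ := (s₂ : ℝ) / a₂ with ht₂
  have e₁ : ((a₁ : ℝ) * l - ((l : ℝ) - m) * s₁) / ((a₁ : ℝ) * ((l : ℝ) - m))
      = x - t₁ := by
    rw [hx, ht₁]; field_simp
  have e₂ : ((a₂ : ℝ) * l - ((l : ℝ) - m) * s₂) / ((a₂ : ℝ) * ((l : ℝ) - m))
      = x - t₂ := by
    rw [hx, ht₂]; field_simp
  rw [e₁] at hH₁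
  rw [e₂] at hH₂
  have ht₁pos : 0 < t₁ := by
    apply div_pos _ hA₁
    exact_mod_cast hs₁pos
  have ht₂le : t₂ ≤ 1 := by
    rw [ht₂, div_le_one hA₂]
    exact_mod_cast hs₂le
  have hle : t₁ ≤ t₂ := by
    rw [ht₁, ht₂, div_le_div_iff₀ hA₁ hA₂]
    have : (a₂:ℝ) * s₁ ≤ (a₁:ℝ) * s₂ := by exact_mod_cast hcase
    linarith
  have h1 : H₂ ≤ H₁ := by
    rw [hH₁, hH₂]
    exact Int.floor_le_floor (by linarith)
  have h2 : H₁ ≤ H₂ + 1 := by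
    rw [hH₁, hH₂]
    calc ⌊x - t₁⌋ ≤ ⌊x - t₂ + 1⌋ := Int.floor_le_floor (by linarith)
      _ = ⌊x - t₂⌋ + 1 := Int.floor_add_one _
  omega
end

section
/- Let r be an integer with 1 ≤ r ≤ q and gcd(r,q) = 1, and for j = 1, 2 let H_j = ⌊(a_j l − (l−m)⟨b_j r⟩_{a_j})/(a_j(l−m))⌋. Then for each j ∈ {1,2} and every positive integer n: a_j m n/(⟨b_j r⟩_{a_j} + a_j H_j) < (l−m)n ≤ a_j l n/(⟨b_j r⟩_{a_j} + a_j H_j). -/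
theorem lminusm_n_between (l m : ℕ) (hlm : m < l)
    (a₁ a₂ b₁ b₂ : ℕ) (ha₁ : 0 < a₁) (ha₂ : 0 < a₂) (hb₁ : 0 < b₁) (hb₂ : 0 < b₂)
    (hcop₁ : Nat.gcd a₁ b₁ = 1) (hcop₂ : Nat.gcd a₂ b₂ = 1)
    (q : ℕ) (hq : q = Nat.lcm a₁ a₂)
    (r : ℕ) (hr : 1 ≤ r) (hrq : r ≤ q) (hgcd : Nat.gcd r q = 1) :
    ∀ a b : ℕ, ((a, b) = (a₁, b₁) ∨ (a, b) = (a₂, b₂)) →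
      ∀ H : ℤ, H = ⌊((a : ℝ) * l - ((l : ℝ) - m) * modRep a (b * r)) /
          ((a : ℝ) * ((l : ℝ) - m))⌋ →
        ∀ n : ℕ, 0 < n →
          (a : ℝ) * m * n / ((modRep a (b * r) : ℝ) + (a : ℝ) * H) < ((l : ℝ) - m) * n ∧
          ((l : ℝ) - m) * n ≤ (a : ℝ) * l * n / ((modRep a (b * r) : ℝ) + (a : ℝ) * H) := by
  intro a b hab H hH n hn
  have haN : 0 < a := by
    rcases hab with h | h <;> simp only [Prod.mk.injEq] at h <;> omega
  have ha : (0 : ℝ) < a := by exact_mod_cast haN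
  have hml : (m : ℝ) < l := by exact_mod_cast hlm
  have hnR : (0 : ℝ) < n := by exact_mod_cast hn
  set s : ℝ := (modRep a (b * r) : ℝ) with hs
  have hs0 : 0 ≤ s := Nat.cast_nonneg _
  have hc : (0 : ℝ) < (a : ℝ) * ((l : ℝ) - m) := by nlinarith
  have h1 : (H : ℝ) ≤ ((a : ℝ) * l - ((l : ℝ) - m) * s) / ((a : ℝ) * ((l : ℝ) - m)) := by
    rw [hH]; exact Int.floor_le _
  have h2 : ((a : ℝ) * l - ((l : ℝ) - m) * s) / ((a : ℝ) * ((l : ℝ) - m)) < (H : ℝ) + 1 := by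
    rw [hH]; exact Int.lt_floor_add_one _
  rw [div_lt_iff₀ hc] at h2
  rw [le_div_iff₀ hc] at h1
  -- am < (l-m)(s + aH) ≤ al
  have key1 : (a : ℝ) * m < ((l : ℝ) - m) * (s + (a : ℝ) * H) := by nlinarith
  have key2 : ((l : ℝ) - m) * (s + (a : ℝ) * H) ≤ (a : ℝ) * l := by nlinarith
  have hD : (0 : ℝ) < s + (a : ℝ) * H := by nlinarith
  constructor
  · rw [div_lt_iff₀ hD]
    have h := mul_lt_mul_of_pos_right key1 hnR
    ring_nf at h ⊢
    linarith
  · rw [le_div_iff₀ hD]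
    have h := mul_le_mul_of_nonneg_right key2 hnR.le
    ring_nf at h ⊢
    linarith
end

section
/- Let r be an integer with 1 ≤ r ≤ q and gcd(r,q) = 1, and let K₁ = ⌊(a₁a₂l + a₂⟨b₁r⟩_{a₁}m − a₁⟨b₂r⟩_{a₂}l)/(a₁a₂(l−m))⌋. Then for every positive integer n and every integer i ≥ K₁ one has a₁ln/(⟨b₁r⟩_{a₁} + a₁(i+1)) > a₂mn/(⟨b₂r⟩_{a₂} + a₂i), while for every integer i with 0 ≤ i ≤ K₁ − 1 (when K₁ ≥ 1) one has a₁ln/(⟨b₁r⟩_{a₁} + a₁(i+1)) ≤ a₂mn/(⟨b₂r⟩_{a₂} + a₂i). -/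
set_option maxHeartbeats 1000000


theorem K1_threshold (l m : ℕ) (hlm : m < l)
    (a₁ a₂ b₁ b₂ : ℕ) (ha₁ : 0 < a₁) (ha₂ : 0 < a₂) (hb₁ : 0 < b₁) (hb₂ : 0 < b₂)
    (hcop₁ : Nat.gcd a₁ b₁ = 1) (hcop₂ : Nat.gcd a₂ b₂ = 1)
    (q : ℕ) (hq : q = Nat.lcm a₁ a₂)
    (r : ℕ) (hr : 1 ≤ r) (hrq : r ≤ q) (hgcd : Nat.gcd r q = 1)
    (s₁ s₂ : ℕ) (hs₁ : s₁ = modRep a₁ (b₁ * r)) (hs₂ : s₂ = modRep a₂ (b₂ * r))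
    (K₁ : ℤ)
    (hK₁ : K₁ = ⌊((a₁ : ℝ) * a₂ * l + (a₂ : ℝ) * s₁ * m - (a₁ : ℝ) * s₂ * l) /
        ((a₁ : ℝ) * a₂ * ((l : ℝ) - m))⌋)
    (n : ℕ) (hn : 0 < n) :
    (∀ i : ℤ, K₁ ≤ i →
        (a₂ : ℝ) * m * n / ((s₂ : ℝ) + (a₂ : ℝ) * i) <
          (a₁ : ℝ) * l * n / ((s₁ : ℝ) + (a₁ : ℝ) * ((i : ℝ) + 1))) ∧
    (∀ i : ℤ, 0 ≤ i → i ≤ K₁ - 1 →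
        (a₁ : ℝ) * l * n / ((s₁ : ℝ) + (a₁ : ℝ) * ((i : ℝ) + 1)) ≤
          (a₂ : ℝ) * m * n / ((s₂ : ℝ) + (a₂ : ℝ) * i)) := by
  have hs1le : s₁ ≤ a₁ := by
    have := Nat.mod_lt (b₁ * r - 1) ha₁
    simp [hs₁, modRep]; omega
  have hs1ge : 1 ≤ s₁ := by simp [hs₁, modRep]
  have hs2le : s₂ ≤ a₂ := by
    have := Nat.mod_lt (b₂ * r - 1) ha₂
    simp [hs₂, modRep]; omega
  have hs2ge : 1 ≤ s₂ := by simp [hs₂, modRep]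
  -- real casts
  have ha₁R : (0:ℝ) < a₁ := by exact_mod_cast ha₁
  have ha₂R : (0:ℝ) < a₂ := by exact_mod_cast ha₂
  have hs1leR : (s₁:ℝ) ≤ a₁ := by exact_mod_cast hs1le
  have hs1geR : (1:ℝ) ≤ s₁ := by exact_mod_cast hs1ge
  have hs2leR : (s₂:ℝ) ≤ a₂ := by exact_mod_cast hs2le
  have hs2geR : (1:ℝ) ≤ s₂ := by exact_mod_cast hs2ge
  have hlmR : (m:ℝ) < l := by exact_mod_cast hlm
  have hmR : (0:ℝ) ≤ m := by positivity
  have hlR : (0:ℝ) < l := lt_of_le_of_lt hmR hlmR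
  have hnR : (0:ℝ) < n := by exact_mod_cast hn
  have hD : (0:ℝ) < (a₁ : ℝ) * a₂ * ((l : ℝ) - m) := by
    have := sub_pos.mpr hlmR
    positivity
  have hN : (0:ℝ) ≤ (a₁ : ℝ) * a₂ * l + (a₂ : ℝ) * s₁ * m - (a₁ : ℝ) * s₂ * l := by
    nlinarith [mul_nonneg (mul_nonneg ha₂R.le (le_trans zero_le_one hs1geR)) hmR,
      mul_nonneg (mul_nonneg ha₁R.le hlR.le) (sub_nonneg.mpr hs2leR)]
  have hK0 : (0:ℤ) ≤ K₁ := by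
    rw [hK₁]
    exact Int.floor_nonneg.mpr (div_nonneg hN hD.le)
  have hfl : (K₁:ℝ) ≤ ((a₁ : ℝ) * a₂ * l + (a₂ : ℝ) * s₁ * m - (a₁ : ℝ) * s₂ * l) /
      ((a₁ : ℝ) * a₂ * ((l : ℝ) - m)) := by
    rw [hK₁]; exact Int.floor_le _
  have hfl2 : ((a₁ : ℝ) * a₂ * l + (a₂ : ℝ) * s₁ * m - (a₁ : ℝ) * s₂ * l) /
      ((a₁ : ℝ) * a₂ * ((l : ℝ) - m)) - 1 < (K₁:ℝ) := by
    rw [hK₁]; exact Int.sub_one_lt_floor _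
  constructor
  · intro i hi
    have hi0 : (0:ℤ) ≤ i := le_trans hK0 hi
    have hiR : (0:ℝ) ≤ (i:ℝ) := by exact_mod_cast hi0
    have hiKR : (K₁:ℝ) ≤ (i:ℝ) := by exact_mod_cast hi
    have hd2 : (0:ℝ) < (s₂ : ℝ) + (a₂ : ℝ) * i := by
      linarith [mul_nonneg ha₂R.le hiR]
    have hd1 : (0:ℝ) < (s₁ : ℝ) + (a₁ : ℝ) * ((i : ℝ) + 1) := by
      linarith [mul_nonneg ha₁R.le hiR]
    rw [div_lt_div_iff₀ hd2 hd1]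
    have key : (a₁ : ℝ) * a₂ * l + (a₂ : ℝ) * s₁ * m - (a₁ : ℝ) * s₂ * l <
        (a₁ : ℝ) * a₂ * ((l : ℝ) - m) * ((i:ℝ) + 1) := by
      have h1 : ((a₁ : ℝ) * a₂ * l + (a₂ : ℝ) * s₁ * m - (a₁ : ℝ) * s₂ * l) /
          ((a₁ : ℝ) * a₂ * ((l : ℝ) - m)) < (i:ℝ) + 1 := by linarith
      have := (div_lt_iff₀ hD).mp h1
      linarith
    nlinarith [mul_pos hnR (sub_pos.mpr key)]
  · intro i hi0 hi
    have hiR : (0:ℝ) ≤ (i:ℝ) := by exact_mod_cast hi0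
    have hiKR : (i:ℝ) + 1 ≤ (K₁:ℝ) := by
      have : i + 1 ≤ K₁ := by omega
      exact_mod_cast this
    have hd2 : (0:ℝ) < (s₂ : ℝ) + (a₂ : ℝ) * i := by
      linarith [mul_nonneg ha₂R.le hiR]
    have hd1 : (0:ℝ) < (s₁ : ℝ) + (a₁ : ℝ) * ((i : ℝ) + 1) := by
      linarith [mul_nonneg ha₁R.le hiR]
    rw [div_le_div_iff₀ hd1 hd2]
    have key : (a₁ : ℝ) * a₂ * ((l : ℝ) - m) * ((i:ℝ) + 1) ≤
        (a₁ : ℝ) * a₂ * l + (a₂ : ℝ) * s₁ * m - (a₁ : ℝ) * s₂ * l := by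
      have h1 : (i:ℝ) + 1 ≤ ((a₁ : ℝ) * a₂ * l + (a₂ : ℝ) * s₁ * m - (a₁ : ℝ) * s₂ * l) /
          ((a₁ : ℝ) * a₂ * ((l : ℝ) - m)) := le_trans hiKR hfl
      have := (le_div_iff₀ hD).mp h1
      linarith
    nlinarith [mul_nonneg hnR.le (sub_nonneg.mpr key)]
end

section
/- Let r be an integer with 1 ≤ r ≤ q and gcd(r,q) = 1, and for j = 1, 2 let H_j = ⌊(a_j l − (l−m)⟨b_j r⟩_{a_j})/(a_j(l−m))⌋. Fix j ∈ {1,2} with H_j ≥ 1 and a positive integer n. Then for every integer i with 1 ≤ i ≤ H_j one has a_j m n/(⟨b_j r⟩_{a_j} + a_j(i−1)) ≥ a_j l n/(⟨b_j r⟩_{a_j} + a_j i); consequently, for any integers i₁ ≠ i₂ with 0 ≤ i₁, i₂ ≤ H_j, the intervals ( a_j m n/(⟨b_j r⟩_{a_j}+a_j i₁), a_j l n/(⟨b_j r⟩_{a_j}+a_j i₁) ] and ( a_j m n/(⟨b_j r⟩_{a_j}+a_j i₂), a_j l n/(⟨b_j r⟩_{a_j}+a_j i₂) ] are disjoint. 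-/
open Set

/-- Positivity of `a` is forced because `x / 0 = 0`, so for `a = 0` the floor is `0 < i`. -/
theorem pos_and_sub_mul_le_of_le_floor {a s L M : ℝ} (hML : M < L) (ha : 0 ≤ a) {i : ℤ}
    (hi : 1 ≤ i) (hiH : i ≤ ⌊(a * L - (L - M) * s) / (a * (L - M))⌋) :
    0 < a ∧ (L - M) * (s + a * i) ≤ a * L := by
  have hLM : 0 < L - M := sub_pos.2 hML
  obtain rfl | ha := ha.eq_or_lt
  · simp only [zero_mul, zero_sub, div_zero, Int.floor_zero] at hiH
    omega
  refine ⟨ha, ?_⟩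
  have hiq := (le_div_iff₀ (mul_pos ha hLM)).1 (Int.le_floor.1 hiH)
  linarith

section Intervals

variable {a s L M n : ℝ}

theorem mul_div_add_le_mul_div_add_sub_one (ha : 0 < a) (hs : 0 < s) (hn : 0 ≤ n) {i : ℝ}
    (hi : 1 ≤ i) (h : (L - M) * (s + a * i) ≤ a * L) :
    a * L * n / (s + a * i) ≤ a * M * n / (s + a * (i - 1)) := by
  have hprev : 0 < s + a * (i - 1) := by nlinarith
  rw [div_le_div_iff₀ (by linarith) hprev]
  nlinarith [mul_nonneg (mul_nonneg ha.le hn) (sub_nonneg.2 h)]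

theorem disjoint_Ioc_mul_div_add_of_lt (ha : 0 < a) (hs : 0 < s) (hn : 0 ≤ n) (hM : 0 ≤ M)
    {i j : ℤ} (hi : 0 ≤ i) (hij : i < j) (h : (L - M) * (s + a * j) ≤ a * L) :
    Disjoint (Ioc (a * M * n / (s + a * j)) (a * L * n / (s + a * j)))
      (Ioc (a * M * n / (s + a * i)) (a * L * n / (s + a * i))) := by
  have hij' : (i : ℝ) + 1 ≤ j := by exact_mod_cast hij
  have hi' : (0 : ℝ) ≤ i := by exact_mod_cast hi
  refine Ioc_disjoint_Ioc_of_le ?_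
  calc a * L * n / (s + a * j)
      ≤ a * M * n / (s + a * (j - 1)) :=
        mul_div_add_le_mul_div_add_sub_one ha hs hn (by linarith) h
    _ ≤ a * M * n / (s + a * i) :=
        div_le_div_of_nonneg_left (by positivity) (by positivity) (by nlinarith)

end Intervals

theorem intervals_disjoint_general (l m : ℕ) (hlm : m < l) (r : ℕ) (a b : ℕ)
    (s : ℕ) (hs : s = modRep a (b * r))
    (H : ℤ) (hH : H = ⌊((a : ℝ) * l - ((l : ℝ) - m) * s) / ((a : ℝ) * ((l : ℝ) - m))⌋)
    (n : ℕ) :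
    (∀ i : ℤ, 1 ≤ i → i ≤ H →
        (a : ℝ) * l * n / ((s : ℝ) + (a : ℝ) * i) ≤
          (a : ℝ) * m * n / ((s : ℝ) + (a : ℝ) * ((i : ℝ) - 1))) ∧
    (∀ i₁ i₂ : ℤ, 0 ≤ i₁ → i₁ ≤ H → 0 ≤ i₂ → i₂ ≤ H → i₁ ≠ i₂ →
        Disjoint
          (Set.Ioc ((a : ℝ) * m * n / ((s : ℝ) + (a : ℝ) * i₁))
            ((a : ℝ) * l * n / ((s : ℝ) + (a : ℝ) * i₁)))
          (Set.Ioc ((a : ℝ) * m * n / ((s : ℝ) + (a : ℝ) * i₂))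
            ((a : ℝ) * l * n / ((s : ℝ) + (a : ℝ) * i₂)))) := by
  have hs_pos : (0 : ℝ) < s := by rw [hs, modRep]; positivity
  have key : ∀ i : ℤ, 1 ≤ i → i ≤ H → 0 < (a : ℝ) ∧ ((l : ℝ) - m) * (s + a * i) ≤ a * l :=
    fun i hi hiH => pos_and_sub_mul_le_of_le_floor (by exact_mod_cast hlm) a.cast_nonneg hi
      (hH ▸ hiH)
  refine ⟨fun i hi hiH => ?_, fun i₁ i₂ h₁ h₁H h₂ h₂H hne => ?_⟩
  · obtain ⟨ha, h⟩ := key i hi hiH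
    exact mul_div_add_le_mul_div_add_sub_one ha hs_pos n.cast_nonneg (by exact_mod_cast hi) h
  rcases hne.lt_or_gt with hlt | hlt
  · obtain ⟨ha, h⟩ := key i₂ (by omega) h₂H
    exact (disjoint_Ioc_mul_div_add_of_lt ha hs_pos n.cast_nonneg m.cast_nonneg h₁ hlt h).symm
  · obtain ⟨ha, h⟩ := key i₁ (by omega) h₁H
    exact disjoint_Ioc_mul_div_add_of_lt ha hs_pos n.cast_nonneg m.cast_nonneg h₂ hlt h

theorem intervals_disjoint (l m : ℕ) (hlm : m < l)
    (a₁ a₂ b₁ b₂ : ℕ) (ha₁ : 0 < a₁) (ha₂ : 0 < a₂) (hb₁ : 0 < b₁) (hb₂ : 0 < b₂)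
    (hcop₁ : Nat.gcd a₁ b₁ = 1) (hcop₂ : Nat.gcd a₂ b₂ = 1)
    (q : ℕ) (hq : q = Nat.lcm a₁ a₂)
    (r : ℕ) (hr : 1 ≤ r) (hrq : r ≤ q) (hgcd : Nat.gcd r q = 1)
    (a b : ℕ) (hj : (a, b) = (a₁, b₁) ∨ (a, b) = (a₂, b₂))
    (s : ℕ) (hs : s = modRep a (b * r))
    (H : ℤ)
    (hH : H = ⌊((a : ℝ) * l - ((l : ℝ) - m) * s) / ((a : ℝ) * ((l : ℝ) - m))⌋)
    (hH1 : 1 ≤ H) (n : ℕ) (hn : 0 < n) :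
    (∀ i : ℤ, 1 ≤ i → i ≤ H →
        (a : ℝ) * l * n / ((s : ℝ) + (a : ℝ) * i) ≤
          (a : ℝ) * m * n / ((s : ℝ) + (a : ℝ) * ((i : ℝ) - 1))) ∧
    (∀ i₁ i₂ : ℤ, 0 ≤ i₁ → i₁ ≤ H → 0 ≤ i₂ → i₂ ≤ H → i₁ ≠ i₂ →
        Disjoint
          (Set.Ioc ((a : ℝ) * m * n / ((s : ℝ) + (a : ℝ) * i₁))
            ((a : ℝ) * l * n / ((s : ℝ) + (a : ℝ) * i₁)))
          (Set.Ioc ((a : ℝ) * m * n / ((s : ℝ) + (a : ℝ) * i₂))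
            ((a : ℝ) * l * n / ((s : ℝ) + (a : ℝ) * i₂)))) :=
  intervals_disjoint_general l m hlm r a b s hs H hH n
end

section
/- Let r be an integer with 1 ≤ r ≤ q and gcd(r,q) = 1, and suppose a₁⟨b₂r⟩_{a₂} ≥ a₂⟨b₁r⟩_{a₁}. Then for every positive integer n and every integer i ≥ 0: (i) a₁ln/(⟨b₁r⟩_{a₁}+a₁i) ≥ a₂ln/(⟨b₂r⟩_{a₂}+a₂i) and a₁mn/(⟨b₁r⟩_{a₁}+a₁i) ≥ a₂mn/(⟨b₂r⟩_{a₂}+a₂i); (ii) a₁ln/(⟨b₁r⟩_{a₁}+a₁(i+1)) < a₂ln/(⟨b₂r⟩_{a₂}+a₂i) and a₁mn/(⟨b₁r⟩_{a₁}+a₁(i+1)) ≤ a₂mn/(⟨b₂r⟩_{a₂}+a₂i). In particular, ( a₁mn/(⟨b₁r⟩_{a₁}+a₁i), a₁ln/(⟨b₁r⟩_{a₁}+a₁i) ] ∪ ( a₂mn/(⟨b₂r⟩_{a₂}+a₂i), a₂ln/(⟨b₂r⟩_{a₂}+a₂i) ] = ( a₂mn/(⟨b₂r⟩_{a₂}+a₂i),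 a₁ln/(⟨b₁r⟩_{a₁}+a₁i) ] whenever i ≥ max(0, K₂+1), where K₂ = ⌊(a₁⟨b₂r⟩_{a₂}m − a₂⟨b₁r⟩_{a₁}l)/(a₁a₂(l−m))⌋. -/
theorem interval_comparisons_and_union (l m : ℕ) (hlm : m < l)
    (a₁ a₂ b₁ b₂ : ℕ) (ha₁ : 0 < a₁) (ha₂ : 0 < a₂) (hb₁ : 0 < b₁) (hb₂ : 0 < b₂)
    (hcop₁ : Nat.gcd a₁ b₁ = 1) (hcop₂ : Nat.gcd a₂ b₂ = 1)
    (q : ℕ) (hq : q = Nat.lcm a₁ a₂)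
    (r : ℕ) (hr : 1 ≤ r) (hrq : r ≤ q) (hgcd : Nat.gcd r q = 1)
    (s₁ s₂ : ℕ) (hs₁ : s₁ = modRep a₁ (b₁ * r)) (hs₂ : s₂ = modRep a₂ (b₂ * r))
    (hcase : a₂ * s₁ ≤ a₁ * s₂)
    (K₂ : ℤ)
    (hK₂ : K₂ = ⌊((a₁ : ℝ) * s₂ * m - (a₂ : ℝ) * s₁ * l) /
        ((a₁ : ℝ) * a₂ * ((l : ℝ) - m))⌋)
    (n : ℕ) (hn : 0 < n) :
    (∀ i : ℤ, 0 ≤ i →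
        (a₂ : ℝ) * l * n / ((s₂ : ℝ) + (a₂ : ℝ) * i) ≤
            (a₁ : ℝ) * l * n / ((s₁ : ℝ) + (a₁ : ℝ) * i) ∧
        (a₂ : ℝ) * m * n / ((s₂ : ℝ) + (a₂ : ℝ) * i) ≤
            (a₁ : ℝ) * m * n / ((s₁ : ℝ) + (a₁ : ℝ) * i) ∧
        (a₁ : ℝ) * l * n / ((s₁ : ℝ) + (a₁ : ℝ) * ((i : ℝ) + 1)) <
            (a₂ : ℝ) * l * n / ((s₂ : ℝ) + (a₂ : ℝ) * i) ∧
        (a₁ : ℝ) * m * n / ((s₁ : ℝ) + (a₁ : ℝ) * ((i : ℝ) + 1)) ≤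
            (a₂ : ℝ) * m * n / ((s₂ : ℝ) + (a₂ : ℝ) * i)) ∧
    (∀ i : ℤ, max 0 (K₂ + 1) ≤ i →
        Set.Ioc ((a₁ : ℝ) * m * n / ((s₁ : ℝ) + (a₁ : ℝ) * i))
            ((a₁ : ℝ) * l * n / ((s₁ : ℝ) + (a₁ : ℝ) * i)) ∪
          Set.Ioc ((a₂ : ℝ) * m * n / ((s₂ : ℝ) + (a₂ : ℝ) * i))
            ((a₂ : ℝ) * l * n / ((s₂ : ℝ) + (a₂ : ℝ) * i)) =
        Set.Ioc ((a₂ : ℝ) * m * n / ((s₂ : ℝ) + (a₂ : ℝ) * i))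
          ((a₁ : ℝ) * l * n / ((s₁ : ℝ) + (a₁ : ℝ) * i))) := by
  have hs1p : (1:ℝ) ≤ s₁ := by
    have : 1 ≤ s₁ := by simp [hs₁, modRep]
    exact_mod_cast this
  have hs2p : (1:ℝ) ≤ s₂ := by
    have : 1 ≤ s₂ := by simp [hs₂, modRep]
    exact_mod_cast this
  have hs2le : (s₂:ℝ) ≤ a₂ := by
    have : s₂ ≤ a₂ := by
      rw [hs₂, modRep]
      exact Nat.succ_le_of_lt (Nat.mod_lt _ ha₂)
    exact_mod_cast this
  have ha1R : (0:ℝ) < a₁ := by exact_mod_cast ha₁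
  have ha2R : (0:ℝ) < a₂ := by exact_mod_cast ha₂
  have hcaseR : (a₂:ℝ) * s₁ ≤ (a₁:ℝ) * s₂ := by exact_mod_cast hcase
  have hnR : (0:ℝ) < n := by exact_mod_cast hn
  have hlR : (0:ℝ) < l := by
    have : 0 < l := Nat.lt_of_le_of_lt (Nat.zero_le m) hlm
    exact_mod_cast this
  have hmR : (0:ℝ) ≤ m := by positivity
  have hmlR : (m:ℝ) < l := by exact_mod_cast hlm
  have hpos : (0:ℝ) < (a₂:ℝ) * s₁ + a₁ * a₂ - a₁ * s₂ := by
    linarith [mul_le_mul_of_nonneg_left hs2le ha1R.le,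
      mul_le_mul_of_nonneg_left hs1p ha2R.le]
  have P1 : ∀ i : ℤ, 0 ≤ i →
      (a₂ : ℝ) * l * n / ((s₂ : ℝ) + (a₂ : ℝ) * i) ≤
          (a₁ : ℝ) * l * n / ((s₁ : ℝ) + (a₁ : ℝ) * i) ∧
      (a₂ : ℝ) * m * n / ((s₂ : ℝ) + (a₂ : ℝ) * i) ≤
          (a₁ : ℝ) * m * n / ((s₁ : ℝ) + (a₁ : ℝ) * i) ∧
      (a₁ : ℝ) * l * n / ((s₁ : ℝ) + (a₁ : ℝ) * ((i : ℝ) + 1)) <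
          (a₂ : ℝ) * l * n / ((s₂ : ℝ) + (a₂ : ℝ) * i) ∧
      (a₁ : ℝ) * m * n / ((s₁ : ℝ) + (a₁ : ℝ) * ((i : ℝ) + 1)) ≤
          (a₂ : ℝ) * m * n / ((s₂ : ℝ) + (a₂ : ℝ) * i) := by
    intro i hi
    have hiR : (0:ℝ) ≤ (i:ℝ) := by exact_mod_cast hi
    have hd1 : (0:ℝ) < (s₁ : ℝ) + (a₁ : ℝ) * i := by
      linarith [mul_nonneg ha1R.le hiR]
    have hd2 : (0:ℝ) < (s₂ : ℝ) + (a₂ : ℝ) * i := by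
      linarith [mul_nonneg ha2R.le hiR]
    have hd1' : (0:ℝ) < (s₁ : ℝ) + (a₁ : ℝ) * ((i:ℝ) + 1) := by
      linarith [mul_nonneg ha1R.le (by linarith : (0:ℝ) ≤ (i:ℝ) + 1)]
    refine ⟨?_, ?_, ?_, ?_⟩
    · rw [div_le_div_iff₀ hd2 hd1]
      linarith [mul_le_mul_of_nonneg_left hcaseR (by positivity : (0:ℝ) ≤ (l:ℝ) * n)]
    · rw [div_le_div_iff₀ hd2 hd1]
      linarith [mul_le_mul_of_nonneg_left hcaseR (mul_nonneg hmR hnR.le)]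
    · rw [div_lt_div_iff₀ hd1' hd2]
      linarith [mul_pos (mul_pos hlR hnR) hpos]
    · rw [div_le_div_iff₀ hd1' hd2]
      linarith [mul_nonneg (mul_nonneg hmR hnR.le) hpos.le]
  refine ⟨P1, ?_⟩
  intro i hi
  have hi0 : (0:ℤ) ≤ i := le_trans (le_max_left _ _) hi
  have hiK : K₂ + 1 ≤ i := le_trans (le_max_right _ _) hi
  have hiR : (0:ℝ) ≤ (i:ℝ) := by exact_mod_cast hi0
  have hd1 : (0:ℝ) < (s₁ : ℝ) + (a₁ : ℝ) * i := by
    linarith [mul_nonneg ha1R.le hiR]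
  have hd2 : (0:ℝ) < (s₂ : ℝ) + (a₂ : ℝ) * i := by
    linarith [mul_nonneg ha2R.le hiR]
  have hD : (0:ℝ) < (a₁ : ℝ) * a₂ * ((l : ℝ) - m) := by
    apply mul_pos (mul_pos ha1R ha2R); linarith
  have hX : ((a₁:ℝ) * s₂ * m - (a₂:ℝ) * s₁ * l) < ((a₁:ℝ) * a₂ * ((l:ℝ) - m)) * i := by
    have h1 : ((a₁:ℝ) * s₂ * m - (a₂:ℝ) * s₁ * l) / ((a₁:ℝ) * a₂ * ((l:ℝ) - m))
        < (K₂ : ℝ) + 1 := by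
      rw [hK₂]; push_cast; exact Int.lt_floor_add_one _
    have h2 : ((K₂ : ℝ) + 1) ≤ (i : ℝ) := by exact_mod_cast hiK
    rw [div_lt_iff₀ hD] at h1
    have h3 := mul_le_mul_of_nonneg_left h2 hD.le
    linarith
  -- key middle inequality : A₁m ≤ A₂l
  have hC : (a₁ : ℝ) * m * n / ((s₁ : ℝ) + (a₁ : ℝ) * i) ≤
      (a₂ : ℝ) * l * n / ((s₂ : ℝ) + (a₂ : ℝ) * i) := by
    rw [div_le_div_iff₀ hd1 hd2]
    linarith [mul_le_mul_of_nonneg_left hX.le hnR.le]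
  obtain ⟨hB, hA, -, -⟩ := P1 i hi0
  ext x
  simp only [Set.mem_union, Set.mem_Ioc]
  constructor
  · rintro (⟨h1, h2⟩ | ⟨h1, h2⟩)
    · exact ⟨by linarith, h2⟩
    · exact ⟨h1, by linarith⟩
  · rintro ⟨h1, h2⟩
    by_cases hx : x ≤ (a₂ : ℝ) * l * n / ((s₂ : ℝ) + (a₂ : ℝ) * i)
    · exact Or.inr ⟨h1, hx⟩
    · exact Or.inl ⟨by linarith [not_le.1 hx], h2⟩
end

section
/- Let r be an integer with 1 ≤ r ≤ q and gcd(r,q) = 1, suppose a₁⟨b₂r⟩_{a₂} ≥ a₂⟨b₁r⟩_{a₁}, and let K₁ = ⌊(a₁a₂l + a₂⟨b₁r⟩_{a₁}m − a₁⟨b₂r⟩_{a₂}l)/(a₁a₂(l−m))⌋ and K₂ = ⌊(a₁⟨b₂r⟩_{a₂}m − a₂⟨b₁r⟩_{a₁}l)/(a₁a₂(l−m))⌋. If K₁ ≥ K₂ + 1, then for every positive integer n: ( ⋃_{j=1}^{2} ⋃_{i=K₁}^{H_j} ( a_j m n/(⟨b_j r⟩_{a_j}+a_j i), a_j l n/(⟨b_j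 r⟩_{a_j}+a_j i) ] ) ∪ (0, (l−m)n] = ( 0, a₁ l n/(⟨b₁r⟩_{a₁}+a₁K₁) ], where H_j = ⌊(a_j l − (l−m)⟨b_j r⟩_{a_j})/(a_j(l−m))⌋. -/
set_option maxHeartbeats 2000000 in
theorem union_from_K1 (l m : ℕ) (hlm : m < l)
    (a₁ a₂ b₁ b₂ : ℕ) (ha₁ : 0 < a₁) (ha₂ : 0 < a₂) (hb₁ : 0 < b₁) (hb₂ : 0 < b₂)
    (hcop₁ : Nat.gcd a₁ b₁ = 1) (hcop₂ : Nat.gcd a₂ b₂ = 1)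
    (q : ℕ) (hq : q = Nat.lcm a₁ a₂)
    (r : ℕ) (hr : 1 ≤ r) (hrq : r ≤ q) (hgcd : Nat.gcd r q = 1)
    (s₁ s₂ : ℕ) (hs₁ : s₁ = modRep a₁ (b₁ * r)) (hs₂ : s₂ = modRep a₂ (b₂ * r))
    (hcase : a₂ * s₁ ≤ a₁ * s₂)
    (K₁ K₂ : ℤ)
    (hK₁ : K₁ = ⌊((a₁ : ℝ) * a₂ * l + (a₂ : ℝ) * s₁ * m - (a₁ : ℝ) * s₂ * l) /
        ((a₁ : ℝ) * a₂ * ((l : ℝ) - m))⌋)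
    (hK₂ : K₂ = ⌊((a₁ : ℝ) * s₂ * m - (a₂ : ℝ) * s₁ * l) /
        ((a₁ : ℝ) * a₂ * ((l : ℝ) - m))⌋)
    (H₁ H₂ : ℤ)
    (hH₁ : H₁ = ⌊((a₁ : ℝ) * l - ((l : ℝ) - m) * s₁) / ((a₁ : ℝ) * ((l : ℝ) - m))⌋)
    (hH₂ : H₂ = ⌊((a₂ : ℝ) * l - ((l : ℝ) - m) * s₂) / ((a₂ : ℝ) * ((l : ℝ) - m))⌋)
    (hK : K₂ + 1 ≤ K₁)
    (n : ℕ) (hn : 0 < n) :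
    ((⋃ i ∈ Set.Icc K₁ H₁,
        Set.Ioc ((a₁ : ℝ) * m * n / ((s₁ : ℝ) + (a₁ : ℝ) * i))
          ((a₁ : ℝ) * l * n / ((s₁ : ℝ) + (a₁ : ℝ) * i))) ∪
      (⋃ i ∈ Set.Icc K₁ H₂,
        Set.Ioc ((a₂ : ℝ) * m * n / ((s₂ : ℝ) + (a₂ : ℝ) * i))
          ((a₂ : ℝ) * l * n / ((s₂ : ℝ) + (a₂ : ℝ) * i))) ∪
      Set.Ioc (0 : ℝ) (((l : ℝ) - m) * n))
    = Set.Ioc (0 : ℝ) ((a₁ : ℝ) * l * n / ((s₁ : ℝ) + (a₁ : ℝ) * (K₁ : ℝ))) := by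
  -- basic positivity
  have hA : (0:ℝ) < a₁ := by exact_mod_cast ha₁
  have hB : (0:ℝ) < a₂ := by exact_mod_cast ha₂
  have hN : (0:ℝ) < n := by exact_mod_cast hn
  have hML : (m:ℝ) < l := by exact_mod_cast hlm
  have hM : (0:ℝ) ≤ m := by positivity
  have hL : (0:ℝ) < l := lt_of_le_of_lt hM hML
  have hD : (0:ℝ) < (l:ℝ) - m := by linarith
  have hS : (0:ℝ) ≤ s₁ := by positivity
  have hT : (0:ℝ) ≤ s₂ := by positivity
  have hST : (a₂:ℝ) * s₁ ≤ (a₁:ℝ) * s₂ := by exact_mod_cast hcase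
  have hp : (0:ℝ) < (a₁:ℝ) * a₂ * ((l:ℝ) - m) := by positivity
  have hKK : (K₂:ℝ) + 1 ≤ (K₁:ℝ) := by exact_mod_cast hK
  -- floor consequences
  have hfK₂ : ((a₁:ℝ)*s₂*m - (a₂:ℝ)*s₁*l) / ((a₁:ℝ)*a₂*((l:ℝ)-m)) < (K₂:ℝ) + 1 := by
    rw [hK₂]; exact Int.lt_floor_add_one _
  have E1K : (a₁:ℝ)*s₂*m - (a₂:ℝ)*s₁*l < (a₁:ℝ)*a₂*((l:ℝ)-m) * K₁ := by
    nlinarith [(div_lt_iff₀ hp).mp (lt_of_lt_of_le hfK₂ hKK)]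
  have hfK₁ : ((a₁:ℝ)*a₂*l + (a₂:ℝ)*s₁*m - (a₁:ℝ)*s₂*l) / ((a₁:ℝ)*a₂*((l:ℝ)-m)) < (K₁:ℝ) + 1 := by
    rw [hK₁]; exact Int.lt_floor_add_one _
  have hX₁lt : (a₁:ℝ)*a₂*l + (a₂:ℝ)*s₁*m - (a₁:ℝ)*s₂*l < (a₁:ℝ)*a₂*((l:ℝ)-m) * ((K₁:ℝ)+1) := by
    nlinarith [(div_lt_iff₀ hp).mp hfK₁]
  have hfK₁' : (K₁:ℝ) ≤ ((a₁:ℝ)*a₂*l + (a₂:ℝ)*s₁*m - (a₁:ℝ)*s₂*l) / ((a₁:ℝ)*a₂*((l:ℝ)-m)) := by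
    rw [hK₁]; exact Int.floor_le _
  have hX₁ge : (a₁:ℝ)*a₂*((l:ℝ)-m) * (K₁:ℝ) ≤ (a₁:ℝ)*a₂*l + (a₂:ℝ)*s₁*m - (a₁:ℝ)*s₂*l := by
    nlinarith [(le_div_iff₀ hp).mp hfK₁']
  -- K₁ ≤ Y₁ scaled: a₁(l-m)K₁ ≤ a₁l - (l-m)s₁
  have hY₁ : (a₁:ℝ)*((l:ℝ)-m)*(K₁:ℝ) ≤ (a₁:ℝ)*l - ((l:ℝ)-m)*s₁ := by
    nlinarith [hX₁ge, mul_pos hA hD, hL]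
  -- per-index facts
  have E1 : ∀ i:ℤ, K₁ ≤ i → (a₁:ℝ)*s₂*m - (a₂:ℝ)*s₁*l < (a₁:ℝ)*a₂*((l:ℝ)-m) * (i:ℝ) := by
    intro i hi
    have hiR : (K₁:ℝ) ≤ (i:ℝ) := by exact_mod_cast hi
    nlinarith [E1K, mul_nonneg hp.le (sub_nonneg.mpr hiR)]
  have dp1 : ∀ i:ℤ, K₁ ≤ i → (0:ℝ) < (s₁:ℝ) + a₁ * i := by
    intro i hi
    have h1 := E1 i hi
    nlinarith [mul_nonneg hM (sub_nonneg.mpr hST), mul_pos hB hD, hL]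
  have dp2 : ∀ i:ℤ, K₁ ≤ i → (0:ℝ) < (s₂:ℝ) + a₂ * i := by
    intro i hi
    have h1 := E1 i hi
    nlinarith [mul_nonneg hL.le (sub_nonneg.mpr hST), mul_pos hA hD]
  -- key: left₂(i) ≤ right₁(i+1) cross-multiplied
  have key : ∀ i:ℤ, K₁ ≤ i → (a₂:ℝ)*m*((s₁:ℝ)+a₁*((i:ℝ)+1)) ≤ (a₁:ℝ)*l*((s₂:ℝ)+a₂*i) := by
    intro i hi
    have hiR : (K₁:ℝ) ≤ (i:ℝ) := by exact_mod_cast hi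
    nlinarith [hX₁lt, mul_nonneg hp.le (sub_nonneg.mpr hiR),
      mul_nonneg hM (sub_nonneg.mpr hST)]
  -- gap: left₁(i) ≤ right₂(i) cross-multiplied
  have gap : ∀ i:ℤ, K₁ ≤ i → (a₁:ℝ)*m*((s₂:ℝ)+a₂*i) ≤ (a₂:ℝ)*l*((s₁:ℝ)+a₁*i) := by
    intro i hi
    nlinarith [E1 i hi]
  have dpK : (0:ℝ) < (s₁:ℝ) + a₁ * K₁ := dp1 K₁ le_rfl
  ext x
  simp only [Set.mem_union, Set.mem_iUnion, Set.mem_Icc, Set.mem_Ioc, exists_prop]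
  constructor
  · rintro ((⟨i, ⟨hiK, hiH⟩, hlt, hle⟩ | ⟨i, ⟨hiK, hiH⟩, hlt, hle⟩) | ⟨hx0, hxle⟩)
    · have hdi := dp1 i hiK
      have hiR : (K₁:ℝ) ≤ (i:ℝ) := by exact_mod_cast hiK
      refine ⟨lt_of_le_of_lt (by positivity) hlt, le_trans hle ?_⟩
      rw [div_le_div_iff₀ hdi dpK]
      linarith [mul_nonneg (mul_nonneg (mul_nonneg hA.le hL.le) hN.le)
        (mul_nonneg hA.le (sub_nonneg.mpr hiR))]
    · have hdi := dp2 i hiK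
      have hiR : (K₁:ℝ) ≤ (i:ℝ) := by exact_mod_cast hiK
      refine ⟨lt_of_le_of_lt (by positivity) hlt, le_trans hle ?_⟩
      rw [div_le_div_iff₀ hdi dpK]
      linarith [mul_nonneg (mul_nonneg hL.le hN.le) (sub_nonneg.mpr hST),
        mul_nonneg (mul_nonneg (mul_nonneg (mul_nonneg hA.le hB.le) hL.le) hN.le)
          (sub_nonneg.mpr hiR)]
    · refine ⟨hx0, le_trans hxle ?_⟩
      rw [le_div_iff₀ dpK]
      linarith [mul_le_mul_of_nonneg_right hY₁ hN.le,
        mul_nonneg (mul_nonneg hD.le hS) hN.le]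
  · rintro ⟨hx0, hxR⟩
    by_cases h3 : x ≤ ((l:ℝ) - m) * n
    · exact Or.inr ⟨hx0, h3⟩
    push_neg at h3
    left
    set i : ℤ := ⌊((a₁:ℝ)*l*n / x - s₁) / a₁⌋ with hidef
    have hxK : x * ((s₁:ℝ) + a₁ * K₁) ≤ (a₁:ℝ)*l*n := by
      have := (le_div_iff₀ dpK).mp hxR
      linarith
    have hiK : K₁ ≤ i := by
      rw [hidef]
      apply Int.le_floor.mpr
      rw [le_div_iff₀ hA, le_sub_iff_add_le, le_div_iff₀ hx0]
      linarith [hxK]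
    have hdi := dp1 i hiK
    have hdi1 : (0:ℝ) < (s₁:ℝ) + a₁ * ((i:ℝ) + 1) := by
      have h := dp1 (i+1) (by omega)
      push_cast at h
      linarith
    have hfl : ((i:ℝ)) ≤ ((a₁:ℝ)*l*n / x - s₁) / a₁ := by rw [hidef]; exact Int.floor_le _
    have hxle : x ≤ (a₁:ℝ)*l*n / ((s₁:ℝ) + a₁ * i) := by
      rw [le_div_iff₀ hdi]
      have h1 : (s₁:ℝ) + a₁ * i ≤ (a₁:ℝ)*l*n / x := by
        have := (le_div_iff₀ hA).mp hfl
        linarith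
      linarith [(le_div_iff₀ hx0).mp h1]
    have hfl2 : ((a₁:ℝ)*l*n / x - s₁) / a₁ < (i:ℝ) + 1 := by
      rw [hidef]; exact Int.lt_floor_add_one _
    have hxgt : (a₁:ℝ)*l*n / ((s₁:ℝ) + a₁ * ((i:ℝ)+1)) < x := by
      rw [div_lt_iff₀ hdi1]
      have h1 : (a₁:ℝ)*l*n / x < (s₁:ℝ) + a₁ * ((i:ℝ)+1) := by
        have := (div_lt_iff₀ hA).mp hfl2
        linarith
      linarith [(div_lt_iff₀ hx0).mp h1]
    have hiH₁ : i ≤ H₁ := by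
      rw [hH₁]
      apply Int.le_floor.mpr
      rw [le_div_iff₀ (by positivity : (0:ℝ) < (a₁:ℝ) * ((l:ℝ)-m))]
      have h1 : ((l:ℝ)-m)*n < (a₁:ℝ)*l*n / ((s₁:ℝ) + a₁*i) := lt_of_lt_of_le h3 hxle
      have h2 := (lt_div_iff₀ hdi).mp h1
      have h4 : ((l:ℝ)-m)*((s₁:ℝ)+a₁*i) < (a₁:ℝ)*l := by nlinarith [h2, hN]
      linarith
    by_cases hgap : (a₁:ℝ)*m*n / ((s₁:ℝ) + a₁*i) < x
    · exact Or.inl ⟨i, ⟨hiK, hiH₁⟩, hgap, hxle⟩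
    · push_neg at hgap
      right
      have hdi2 := dp2 i hiK
      have hxle2 : x ≤ (a₂:ℝ)*l*n / ((s₂:ℝ) + a₂*i) := by
        refine le_trans hgap ?_
        rw [div_le_div_iff₀ hdi hdi2]
        linarith [mul_le_mul_of_nonneg_left (gap i hiK) hN.le]
      have hlt2 : (a₂:ℝ)*m*n / ((s₂:ℝ) + a₂*i) < x := by
        refine lt_of_le_of_lt ?_ hxgt
        rw [div_le_div_iff₀ hdi2 hdi1]
        linarith [mul_le_mul_of_nonneg_left (key i hiK) hN.le]
      have hiH₂ : i ≤ H₂ := by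
        rw [hH₂]
        apply Int.le_floor.mpr
        rw [le_div_iff₀ (by positivity : (0:ℝ) < (a₂:ℝ) * ((l:ℝ)-m))]
        have h1 : ((l:ℝ)-m)*n < (a₂:ℝ)*l*n / ((s₂:ℝ) + a₂*i) := lt_of_lt_of_le h3 hxle2
        have h2 := (lt_div_iff₀ hdi2).mp h1
        have h4 : ((l:ℝ)-m)*((s₂:ℝ)+a₂*i) < (a₂:ℝ)*l := by nlinarith [h2, hN]
        linarith
      exact ⟨i, ⟨hiK, hiH₂⟩, hlt2, hxle2⟩
end
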